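/- arXiv:1902.03279 — 9 statements merged into one kernel-verified Lean document; each statement's English description precedes it below -/
import Mathlib

section
/- Let h : ℝ → ℝ be continuous with compact support, and define u : ℝ → ℝ by u(x) = (1/2) ∫_ℝ e^{-|x-y|} h(y) dy. Then u is twice differentiable on ℝ and satisfies u(x) - u''(x) = h(x) for every x ∈ ℝ. -/
open MeasureTheory Real Set

/-!
Splitting the kernel at `y = x` gives
`2 u(x) = e^{-x} A(x) + e^{x} B(x)` with `A(x) = ∫_{y ≤ x} e^{y} h(y) dy` and
`B(x) = ∫_{y > x} e^{-y} h(y) dy`. By the fundamental theorem of calculus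
`A' = e^{x} h` and `B' = -e^{-x} h`; these contributions cancel in the first derivative,
`2 u' = e^{x} B - e^{-x} A`, and add up to `-2 h` in the second, `2 u'' = 2 u - 2 h`.
-/

section TailIntegrals

variable {E : Type*} [NormedAddCommGroup E] [NormedSpace ℝ E] [CompleteSpace E]
  {f : ℝ → E} {x : ℝ}

theorem hasDerivAt_integral_Iic (hf : Integrable f) (hx : ContinuousAt f x) :
    HasDerivAt (fun t => ∫ y in Iic t, f y) (f x) x := by
  have hsplit :
      (fun t => ∫ y in Iic t, f y) = fun t => (∫ y in Iic 0, f y) + ∫ y in 0..t, f y := by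
    funext t
    rw [← intervalIntegral.integral_Iic_sub_Iic hf.integrableOn hf.integrableOn]
    abel
  rw [hsplit]
  exact (intervalIntegral.integral_hasDerivAt_right hf.intervalIntegrable
    hf.aestronglyMeasurable.stronglyMeasurableAtFilter hx).const_add _

theorem hasDerivAt_integral_Ioi (hf : Integrable f) (hx : ContinuousAt f x) :
    HasDerivAt (fun t => ∫ y in Ioi t, f y) (-f x) x := by
  have hcompl : (fun t => ∫ y in Ioi t, f y) = fun t => (∫ y, f y) - ∫ y in Iic t, f y := by
    funext t
    rw [← intervalIntegral.integral_Iic_add_Ioi (b := t) hf.integrableOn hf.integrableOn]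
    abel
  rw [hcompl]
  exact (hasDerivAt_integral_Iic hf hx).const_sub _

end TailIntegrals

theorem integral_exp_neg_abs_sub_mul {h : ℝ → ℝ} (hc : Continuous h)
    (hsupp : HasCompactSupport h) (x : ℝ) :
    ∫ y, exp (-|x - y|) * h y =
      exp (-x) * (∫ y in Iic x, exp y * h y) + exp x * ∫ y in Ioi x, exp (-y) * h y := by
  have hint : Integrable fun y => exp (-|x - y|) * h y :=
    (by fun_prop : Continuous fun y => exp (-|x - y|) * h y).integrable_of_hasCompactSupport
      hsupp.mul_left
  rw [← intervalIntegral.integral_Iic_add_Ioi (b := x) hint.integrableOn hint.integrableOn,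
    ← integral_const_mul, ← integral_const_mul]
  congr 1
  · refine setIntegral_congr_fun measurableSet_Iic fun y (hy : y ≤ x) => ?_
    rw [abs_of_nonneg (sub_nonneg.2 hy), neg_sub, sub_eq_neg_add, exp_add]
    ring
  · refine setIntegral_congr_fun measurableSet_Ioi fun y (hy : x < y) => ?_
    rw [abs_of_neg (sub_neg.2 hy), neg_neg, sub_eq_add_neg, exp_add]
    ring

section VariationOfConstants

variable {h A B : ℝ → ℝ} {x : ℝ}

theorem hasDerivAt_exp_neg_mul_add_exp_mul (hA : HasDerivAt A (exp x * h x) x)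
    (hB : HasDerivAt B (-(exp (-x) * h x)) x) :
    HasDerivAt (fun t => exp (-t) * A t + exp t * B t) (exp x * B x - exp (-x) * A x) x := by
  refine (((hasDerivAt_neg x).exp.mul hA).add ((hasDerivAt_exp x).mul hB)).congr_deriv ?_
  ring

theorem hasDerivAt_exp_mul_sub_exp_neg_mul (hA : HasDerivAt A (exp x * h x) x)
    (hB : HasDerivAt B (-(exp (-x) * h x)) x) :
    HasDerivAt (fun t => exp t * B t - exp (-t) * A t)
      (exp (-x) * A x + exp x * B x - 2 * h x) x := by
  have hexp : exp (-x) * exp x = 1 := by rw [← exp_add, neg_add_cancel, exp_zero]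
  refine (((hasDerivAt_exp x).mul hB).sub ((hasDerivAt_neg x).exp.mul hA)).congr_deriv ?_
  linear_combination (-2 * h x) * hexp

end VariationOfConstants

theorem greens_function_identity_line
    (h : ℝ → ℝ) (hc : Continuous h) (hsupp : HasCompactSupport h)
    (u : ℝ → ℝ)
    (hu : ∀ x, u x = (1/2) * ∫ y : ℝ, Real.exp (-|x - y|) * h y) :
    ∃ u' u'' : ℝ → ℝ,
      (∀ x, HasDerivAt u (u' x) x) ∧
      (∀ x, HasDerivAt u' (u'' x) x) ∧
      (∀ x, u x - u'' x = h x) := by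
  set A : ℝ → ℝ := fun t => ∫ y in Iic t, exp y * h y
  set B : ℝ → ℝ := fun t => ∫ y in Ioi t, exp (-y) * h y
  have hA : ∀ x, HasDerivAt A (exp x * h x) x := fun x =>
    hasDerivAt_integral_Iic ((by fun_prop : Continuous fun y => exp y * h y)
      |>.integrable_of_hasCompactSupport hsupp.mul_left) (by fun_prop)
  have hB : ∀ x, HasDerivAt B (-(exp (-x) * h x)) x := fun x =>
    hasDerivAt_integral_Ioi ((by fun_prop : Continuous fun y => exp (-y) * h y)
      |>.integrable_of_hasCompactSupport hsupp.mul_left) (by fun_prop)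
  have hu_eq : u = fun t => (1/2) * (exp (-t) * A t + exp t * B t) := by
    funext t
    rw [hu, integral_exp_neg_abs_sub_mul hc hsupp]
  refine ⟨fun t => (1/2) * (exp t * B t - exp (-t) * A t), fun t => u t - h t,
    fun x => ?_, fun x => ?_, fun x => by ring⟩
  · rw [hu_eq]
    exact (hasDerivAt_exp_neg_mul_add_exp_mul (hA x) (hB x)).const_mul _
  · refine ((hasDerivAt_exp_mul_sub_exp_neg_mul (hA x) (hB x)).const_mul (1/2 : ℝ)).congr_deriv
      ?_
    rw [hu_eq]
    ring
end

section
/- Let h : ℝ → ℝ be continuous with compact support, and define u : ℝ → ℝ by u(x) = (1/2) ∫_ℝ e^{-|x-y|} h(y) dy. Then u is differentiable on ℝ and for every x ∈ ℝ, u'(x) = -(1/2) ∫_ℝ sgn(x-y) e^{-|x-y|} h(y) dy, where sgn denotes the sign function (with sgn 0 = 0). -/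
/-!
A bounded Lipschitz kernel `K` may be differentiated under the integral sign in
`x ↦ ∫ K (x - y) • h y` for integrable `h`: the difference quotients are dominated by
`C ‖h y‖`, and by Rademacher's theorem `K` is differentiable at `x - y` for almost every `y`
(elsewhere `deriv K` takes the junk value `0`, which the integral does not see).
The kernel `e^{-|t|}` is bounded by `1`, is `1`-Lipschitz, and has derivative
`-sgn t · e^{-|t|}` at every `t ≠ 0`.
-/

open MeasureTheory Real
open scoped NNReal

theorem LipschitzWith.hasDerivAt_integral_comp_sub_smul {E : Type*} [NormedAddCommGroup E]
    [NormedSpace ℝ E] {K : ℝ → ℝ} {C : ℝ≥0} {M : ℝ} (hK : LipschitzWith C K)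
    (hK_bdd : ∀ t, |K t| ≤ M) {h : ℝ → E} (hh : Integrable h) (x₀ : ℝ) :
    HasDerivAt (fun x ↦ ∫ y, K (x - y) • h y) (∫ y, deriv K (x₀ - y) • h y) x₀ := by
  have hK_meas (x : ℝ) : AEStronglyMeasurable (fun y ↦ K (x - y)) :=
    (hK.continuous.comp (continuous_sub_left x)).aestronglyMeasurable
  have h_diff : ∀ᵐ y, HasDerivAt (fun x ↦ K (x - y) • h y) (deriv K (x₀ - y) • h y) x₀ := by
    filter_upwards [(Measure.measurePreserving_sub_left volume x₀).quasiMeasurePreserving.ae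
      hK.ae_differentiableAt_real] with y hy
    exact (hy.hasDerivAt.comp_sub_const x₀ y).smul_const (h y)
  refine (hasDerivAt_integral_of_dominated_loc_of_lip (F := fun x y ↦ K (x - y) • h y)
    (bound := fun y ↦ C * ‖h y‖) Filter.univ_mem
    (.of_forall fun x ↦ (hK_meas x).smul hh.aestronglyMeasurable)
    (hh.bdd_smul M (hK_meas x₀) (.of_forall fun y ↦ hK_bdd (x₀ - y)))
    (((measurable_deriv K).comp (measurable_const.sub measurable_id)).aestronglyMeasurable.smul
      hh.aestronglyMeasurable) (.of_forall fun y ↦ ?_) (hh.norm.const_mul C) h_diff).2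
  refine LipschitzWith.lipschitzOnWith (LipschitzWith.of_dist_le_mul fun a b ↦ ?_)
  rw [Real.coe_nnabs, abs_of_nonneg (by positivity), dist_eq_norm, ← sub_smul, norm_smul,
    ← dist_eq_norm, mul_right_comm]
  gcongr
  simpa using hK.dist_le_mul (a - y) (b - y)

theorem lipschitzWith_exp_neg_abs : LipschitzWith 1 fun t : ℝ ↦ exp (-|t|) := by
  refine LipschitzWith.of_dist_le_mul fun a b ↦ ?_
  wlog hab : |b| ≤ |a| generalizing a b
  · rw [dist_comm, dist_comm a]
    exact this b a (le_of_not_ge hab)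
  have h_mono : exp (-|a|) ≤ exp (-|b|) := exp_le_exp.2 (by linarith)
  have h_diff : exp (-|b|) - exp (-|a|) ≤ |a| - |b| := by
    have h_factor : exp (-|a|) = exp (-|b|) * exp (-(|a| - |b|)) := by
      rw [← exp_add]
      ring_nf
    have h_le_one : exp (-|b|) ≤ 1 := exp_le_one_iff.2 (by simp)
    nlinarith [one_sub_le_exp_neg (|a| - |b|), exp_pos (-|b|)]
  rw [Real.dist_eq, Real.dist_eq, abs_of_nonpos (by linarith), NNReal.coe_one, one_mul]
  linarith [abs_abs_sub_abs_le_abs_sub a b, le_abs_self (|a| - |b|)]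

theorem hasDerivAt_exp_neg_abs {t : ℝ} (ht : t ≠ 0) :
    HasDerivAt (fun t : ℝ ↦ exp (-|t|)) (-(Real.sign t * exp (-|t|))) t := by
  rcases ht.lt_or_gt with ht | ht
  · simpa [Real.sign_of_neg ht, mul_comm] using (hasDerivAt_abs_neg ht).neg.exp
  · simpa [Real.sign_of_pos ht, mul_comm] using (hasDerivAt_abs_pos ht).neg.exp

theorem abs_exp_neg_abs_le_one (t : ℝ) : |exp (-|t|)| ≤ 1 := by
  rw [abs_of_pos (exp_pos _)]
  exact exp_le_one_iff.2 (neg_nonpos.2 (abs_nonneg t))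

theorem deriv_of_greens_convolution_line
    (h : ℝ → ℝ) (hc : Continuous h) (hsupp : HasCompactSupport h)
    (u : ℝ → ℝ)
    (hu : ∀ x, u x = (1/2) * ∫ y : ℝ, Real.exp (-|x - y|) * h y) :
    ∀ x : ℝ,
      HasDerivAt u
        (-(1/2) * ∫ y : ℝ, Real.sign (x - y) * Real.exp (-|x - y|) * h y) x := by
  intro x₀
  have h_conv := lipschitzWith_exp_neg_abs.hasDerivAt_integral_comp_sub_smul
    abs_exp_neg_abs_le_one (hc.integrable_of_hasCompactSupport hsupp) x₀
  have h_kernel : ∫ y, deriv (fun t ↦ exp (-|t|)) (x₀ - y) * h y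
      = -∫ y, Real.sign (x₀ - y) * exp (-|x₀ - y|) * h y := by
    rw [← integral_neg]
    refine integral_congr_ae ?_
    filter_upwards [volume.ae_ne x₀] with y hy
    rw [(hasDerivAt_exp_neg_abs (sub_ne_zero.2 hy.symm)).deriv]
    ring
  simp only [smul_eq_mul, h_kernel] at h_conv
  rw [funext hu]
  exact (h_conv.const_mul (1 / 2)).congr_deriv (by ring)
end

section
/- Let a, b ∈ ℝ with a < b, and let f : ℝ → ℝ be integrable with f ≥ 0 almost everywhere and f = 0 almost everywhere on [a,b]. Define F(x) = -(1/2) ∫_ℝ sgn(x-y) e^{-|x-y|} f(y) dy, where sgn denotes the sign function (sgn 0 = 0). Then F(b) ≥ F(a). -/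
/-!
The kernel `k t = sign t * exp (-|t|)` is decreasing on each of `(-∞, 0)` and `(0, ∞)`. For `y`
outside `[a, b]` the points `a - y ≤ b - y` lie on the same side of `0`, so
`k (b - y) * f y ≤ k (a - y) * f y`; on `[a, b]` both sides vanish since `f = 0` there.
Integrating in `y` gives `F a ≤ F b`.
-/

open MeasureTheory Real Set

@[fun_prop]
lemma Real.measurable_sign : Measurable Real.sign :=
  Measurable.ite measurableSet_Iio measurable_const
    (Measurable.ite measurableSet_Ioi measurable_const measurable_const)

lemma Real.abs_sign_le_one (r : ℝ) : |Real.sign r| ≤ 1 := by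
  rcases Real.sign_apply_eq r with h | h | h <;> simp [h]

lemma abs_sign_mul_exp_neg_abs_le_one (t : ℝ) : |Real.sign t * exp (-|t|)| ≤ 1 := by
  rw [abs_mul, abs_of_pos (exp_pos _)]
  exact mul_le_one₀ (Real.abs_sign_le_one t) (exp_pos _).le (exp_le_one_iff.mpr (by simp))

lemma integrable_sign_mul_exp_neg_abs_sub_mul {f : ℝ → ℝ} (hf : Integrable f) (x : ℝ) :
    Integrable (fun y => Real.sign (x - y) * exp (-|x - y|) * f y) := by
  refine hf.bdd_mul (c := 1) ?_ (.of_forall fun y => abs_sign_mul_exp_neg_abs_le_one (x - y))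
  fun_prop

lemma antitoneOn_sign_mul_exp_neg_abs_Ioi :
    AntitoneOn (fun t => Real.sign t * exp (-|t|)) (Ioi 0) := by
  intro s (hs : 0 < s) t (ht : 0 < t) hst
  simp only [Real.sign_of_pos hs, Real.sign_of_pos ht, abs_of_pos hs, abs_of_pos ht, one_mul]
  exact exp_le_exp.mpr (neg_le_neg hst)

lemma antitoneOn_sign_mul_exp_neg_abs_Iio :
    AntitoneOn (fun t => Real.sign t * exp (-|t|)) (Iio 0) := by
  intro s (hs : s < 0) t (ht : t < 0) hst
  simp only [Real.sign_of_neg hs, Real.sign_of_neg ht, abs_of_neg hs, abs_of_neg ht, neg_neg,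
    neg_one_mul, neg_le_neg_iff]
  exact exp_le_exp.mpr hst

lemma sign_mul_exp_neg_abs_sub_le_of_notMem_Icc {a b y : ℝ} (hab : a ≤ b) (hy : y ∉ Icc a b) :
    Real.sign (b - y) * exp (-|b - y|) ≤ Real.sign (a - y) * exp (-|a - y|) := by
  rcases not_and_or.mp hy with hay | hyb
  · replace hay : y < a := not_le.mp hay
    exact antitoneOn_sign_mul_exp_neg_abs_Ioi (sub_pos.mpr hay) (sub_pos.mpr (hay.trans_le hab))
      (sub_le_sub_right hab y)
  · replace hyb : b < y := not_le.mp hyb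
    exact antitoneOn_sign_mul_exp_neg_abs_Iio (sub_neg.mpr (hab.trans_lt hyb))
      (sub_neg.mpr hyb) (sub_le_sub_right hab y)

theorem F_endpoint_monotone
    (a b : ℝ) (hab : a < b)
    (f : ℝ → ℝ) (hf : Integrable f)
    (hf_nonneg : ∀ᵐ y : ℝ, 0 ≤ f y)
    (hf_zero : ∀ᵐ y : ℝ, y ∈ Set.Icc a b → f y = 0)
    (F : ℝ → ℝ)
    (hF : ∀ x, F x = -(1/2) * ∫ y : ℝ, Real.sign (x - y) * Real.exp (-|x - y|) * f y) :
    F a ≤ F b := by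
  have hintegral_le : ∫ y, Real.sign (b - y) * exp (-|b - y|) * f y
      ≤ ∫ y, Real.sign (a - y) * exp (-|a - y|) * f y := by
    refine integral_mono_ae (integrable_sign_mul_exp_neg_abs_sub_mul hf b)
      (integrable_sign_mul_exp_neg_abs_sub_mul hf a) ?_
    filter_upwards [hf_nonneg, hf_zero] with y hfy hfy_zero
    by_cases hy : y ∈ Icc a b
    · simp [hfy_zero hy]
    · exact mul_le_mul_of_nonneg_right (sign_mul_exp_neg_abs_sub_le_of_notMem_Icc hab.le hy) hfy
  rw [hF a, hF b]
  linarith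
end

section
/- Let a, b ∈ ℝ with a < b, and let f : ℝ → ℝ be integrable with f ≥ 0 almost everywhere, f = 0 almost everywhere on [a,b], and f not equal to 0 almost everywhere on ℝ. Define F(x) = -(1/2) ∫_ℝ sgn(x-y) e^{-|x-y|} f(y) dy, where sgn denotes the sign function (sgn 0 = 0). Then F(b) > F(a). -/
open MeasureTheory Real

/-!
Subtracting the two integrals, `F b - F a = ½ ∫ (k (a - y) - k (b - y)) f y dy` with
`k t = sgn t · e^{-|t|}`. The kernel `k` is strictly decreasing on each of `t < 0` and `t > 0`,
so the weight `k (a - y) - k (b - y)` is positive for every `y ∉ [a, b]`, which is where `f`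
lives; a positive weight against a nonnegative, not a.e. vanishing `f` has positive integral.
-/

theorem Real.monotone_sign : Monotone Real.sign := by
  intro x y hxy
  unfold Real.sign
  split_ifs <;> linarith

noncomputable def signExpKernel (t : ℝ) : ℝ := Real.sign t * exp (-|t|)

theorem measurable_signExpKernel : Measurable signExpKernel :=
  Real.monotone_sign.measurable.mul (measurable_id.abs.neg.exp)

theorem abs_signExpKernel_le_one (t : ℝ) : |signExpKernel t| ≤ 1 := by
  have hsign : |Real.sign t| ≤ 1 := by
    rcases Real.sign_apply_eq t with h | h | h <;> simp [h]
  rw [signExpKernel, abs_mul, abs_of_pos (exp_pos _)]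
  exact mul_le_one₀ hsign (exp_pos _).le (exp_le_one_iff.2 (neg_nonpos.2 (abs_nonneg t)))

theorem integrable_signExpKernel_mul {μ : Measure ℝ} {f : ℝ → ℝ} (hf : Integrable f μ)
    (x : ℝ) :
    Integrable (fun y => signExpKernel (x - y) * f y) μ :=
  hf.bdd_mul (c := 1)
    (measurable_signExpKernel.comp (measurable_const.sub measurable_id)).aestronglyMeasurable
    (Filter.Eventually.of_forall fun y => abs_signExpKernel_le_one (x - y))

theorem signExpKernel_strictAntiOn_Ioi : StrictAntiOn signExpKernel (Set.Ioi 0) := by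
  intro s (hs : 0 < s) t (ht : 0 < t) hst
  simp only [signExpKernel, Real.sign_of_pos hs, Real.sign_of_pos ht, abs_of_pos hs,
    abs_of_pos ht, one_mul]
  exact exp_lt_exp.2 (neg_lt_neg hst)

theorem signExpKernel_strictAntiOn_Iio : StrictAntiOn signExpKernel (Set.Iio 0) := by
  intro s (hs : s < 0) t (ht : t < 0) hst
  simp only [signExpKernel, Real.sign_of_neg hs, Real.sign_of_neg ht, abs_of_neg hs,
    abs_of_neg ht, neg_neg, neg_one_mul, neg_lt_neg_iff]
  exact exp_lt_exp.2 hst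

theorem signExpKernel_sub_lt_of_notMem_Icc {a b y : ℝ} (hab : a < b) (hy : y ∉ Set.Icc a b) :
    signExpKernel (b - y) < signExpKernel (a - y) := by
  rcases not_and_or.1 hy with hya | hyb
  · exact signExpKernel_strictAntiOn_Ioi (Set.mem_Ioi.2 (by linarith))
      (Set.mem_Ioi.2 (by linarith)) (by linarith)
  · exact signExpKernel_strictAntiOn_Iio (Set.mem_Iio.2 (by linarith))
      (Set.mem_Iio.2 (by linarith)) (by linarith)

theorem integral_mul_pos_of_pos_of_ne_zero {α : Type*} [MeasurableSpace α] {μ : Measure α}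
    {w f : α → ℝ} (hwf : Integrable (fun y => w y * f y) μ) (hf : 0 ≤ᵐ[μ] f)
    (hf_ne : ¬ f =ᵐ[μ] 0) (hw : ∀ᵐ y ∂μ, f y ≠ 0 → 0 < w y) :
    0 < ∫ y, w y * f y ∂μ := by
  have hwf_nonneg : 0 ≤ᵐ[μ] fun y => w y * f y := by
    filter_upwards [hf, hw] with y hfy hwy
    rcases eq_or_ne (f y) 0 with h | h
    · simp [h]
    · exact mul_nonneg (hwy h).le hfy
  refine (integral_nonneg_of_ae hwf_nonneg).lt_of_ne fun h => hf_ne ?_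
  filter_upwards [(integral_eq_zero_iff_of_nonneg_ae hwf_nonneg hwf).1 h.symm, hw]
    with y hy hwy
  by_contra hfy
  exact mul_ne_zero (hwy hfy).ne' hfy hy

theorem F_endpoint_strict_monotone
    (a b : ℝ) (hab : a < b)
    (f : ℝ → ℝ) (hf : Integrable f)
    (hf_nonneg : ∀ᵐ y : ℝ, 0 ≤ f y)
    (hf_zero : ∀ᵐ y : ℝ, y ∈ Set.Icc a b → f y = 0)
    (hf_ne : ¬ (f =ᵐ[volume] 0))
    (F : ℝ → ℝ)
    (hF : ∀ x, F x = -(1/2) * ∫ y : ℝ, Real.sign (x - y) * Real.exp (-|x - y|) * f y) :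
    F a < F b := by
  have hdiff : F b - F a =
      1 / 2 * ∫ y, (signExpKernel (a - y) - signExpKernel (b - y)) * f y := by
    simp only [hF, sub_mul]
    rw [integral_sub (integrable_signExpKernel_mul hf a) (integrable_signExpKernel_mul hf b)]
    simp only [signExpKernel]
    ring
  have hpos : 0 < ∫ y, (signExpKernel (a - y) - signExpKernel (b - y)) * f y := by
    refine integral_mul_pos_of_pos_of_ne_zero ?_ hf_nonneg hf_ne ?_
    · simp only [sub_mul]
      exact (integrable_signExpKernel_mul hf a).sub (integrable_signExpKernel_mul hf b)
    · filter_upwards [hf_zero] with y hy hfy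
      exact sub_pos.2 (signExpKernel_sub_lt_of_notMem_Icc hab (mt hy hfy))
  linarith
end

section
/- Let a, b ∈ ℝ with a < b, and let f : ℝ → ℝ be integrable with f ≥ 0 almost everywhere and f = 0 almost everywhere on [a,b]. Define F(x) = -(1/2) ∫_ℝ sgn(x-y) e^{-|x-y|} f(y) dy, where sgn denotes the sign function (sgn 0 = 0). Then F(a) = F(b) if and only if f = 0 almost everywhere on ℝ. -/
/-!
Write `F x = -(1/2) ∫ k (x - y) f y dy` with the odd kernel `k r = sign r * exp (-|r|)`.
On each half-line `k` is strictly decreasing, so `k (a - y) - k (b - y) > 0` for every `y` outside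
`[a, b]`. Hence `F a - F b` is `-(1/2)` times the integral of a nonnegative function which vanishes
exactly where `f` does (as `f = 0` on `[a, b]`), and that integral is zero iff `f = 0` a.e.
-/

open MeasureTheory Real Set

namespace Real

theorem sign_monotone : Monotone Real.sign := by
  intro r s hrs
  rcases lt_trichotomy r 0 with hr | rfl | hr <;> rcases lt_trichotomy s 0 with hs | rfl | hs <;>
    simp only [sign_of_neg, sign_of_pos, sign_zero, *] <;> linarith

theorem measurable_sign_s5 : Measurable Real.sign :=
  sign_monotone.measurable

theorem abs_sign_le_one_s5 (r : ℝ) : |Real.sign r| ≤ 1 := by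
  rcases sign_apply_eq r with h | h | h <;> simp [h]

end Real

noncomputable def oddExpKernel (r : ℝ) : ℝ :=
  Real.sign r * Real.exp (-|r|)

theorem measurable_oddExpKernel : Measurable oddExpKernel :=
  Real.measurable_sign_s5.mul (continuous_abs.neg.rexp).measurable

theorem abs_oddExpKernel_le_one (r : ℝ) : |oddExpKernel r| ≤ 1 := by
  rw [oddExpKernel, abs_mul, abs_of_pos (exp_pos _)]
  exact mul_le_one₀ (Real.abs_sign_le_one_s5 r) (exp_pos _).le
    (exp_le_one_iff.mpr (neg_nonpos.mpr (abs_nonneg r)))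

theorem oddExpKernel_of_pos {r : ℝ} (hr : 0 < r) : oddExpKernel r = exp (-r) := by
  rw [oddExpKernel, sign_of_pos hr, abs_of_pos hr, one_mul]

theorem oddExpKernel_of_neg {r : ℝ} (hr : r < 0) : oddExpKernel r = -exp r := by
  rw [oddExpKernel, sign_of_neg hr, abs_of_neg hr, neg_neg, neg_one_mul]

theorem strictAntiOn_oddExpKernel_Ioi : StrictAntiOn oddExpKernel (Ioi 0) := by
  intro r hr s hs hrs
  rw [oddExpKernel_of_pos hr, oddExpKernel_of_pos hs]
  exact exp_lt_exp.mpr (neg_lt_neg hrs)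

theorem strictAntiOn_oddExpKernel_Iio : StrictAntiOn oddExpKernel (Iio 0) := by
  intro r hr s hs hrs
  rw [oddExpKernel_of_neg hr, oddExpKernel_of_neg hs]
  exact neg_lt_neg (exp_lt_exp.mpr hrs)

theorem oddExpKernel_sub_pos {a b y : ℝ} (hab : a < b) (hy : y ∉ Icc a b) :
    0 < oddExpKernel (a - y) - oddExpKernel (b - y) := by
  rw [sub_pos]
  rcases not_and_or.mp hy with hya | hyb
  · exact strictAntiOn_oddExpKernel_Ioi (mem_Ioi.mpr (by linarith))
      (mem_Ioi.mpr (by linarith)) (by linarith)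
  · exact strictAntiOn_oddExpKernel_Iio (mem_Iio.mpr (by linarith))
      (mem_Iio.mpr (by linarith)) (by linarith)

theorem MeasureTheory.Integrable.oddExpKernel_mul {f : ℝ → ℝ} (hf : Integrable f) (x : ℝ) :
    Integrable (fun y => oddExpKernel (x - y) * f y) :=
  hf.bdd_mul (c := 1)
    (measurable_oddExpKernel.comp (measurable_const.sub measurable_id)).aestronglyMeasurable
    (Filter.Eventually.of_forall fun y => abs_oddExpKernel_le_one (x - y))

theorem MeasureTheory.integral_mul_eq_zero_iff_of_pos {α : Type*} [MeasurableSpace α]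
    {μ : Measure α} {g f : α → ℝ} (hgf : Integrable (fun y => g y * f y) μ)
    (hf : 0 ≤ᵐ[μ] f) (hg : ∀ᵐ y ∂μ, f y = 0 ∨ 0 < g y) :
    ∫ y, g y * f y ∂μ = 0 ↔ f =ᵐ[μ] 0 := by
  have hgf_nonneg : 0 ≤ᵐ[μ] fun y => g y * f y := by
    filter_upwards [hf, hg] with y hfy hgy
    rcases hgy with hfy0 | hgy
    · simp [hfy0]
    · exact mul_nonneg hgy.le hfy
  rw [integral_eq_zero_iff_of_nonneg_ae hgf_nonneg hgf]
  constructor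
  · intro h
    filter_upwards [h, hg] with y hy hgy
    exact hgy.elim id fun hgy => (mul_eq_zero.mp hy).resolve_left hgy.ne'
  · intro h
    filter_upwards [h] with y hy
    simp [hy]

theorem F_endpoint_eq_iff
    (a b : ℝ) (hab : a < b)
    (f : ℝ → ℝ) (hf : Integrable f)
    (hf_nonneg : ∀ᵐ y : ℝ, 0 ≤ f y)
    (hf_zero : ∀ᵐ y : ℝ, y ∈ Set.Icc a b → f y = 0)
    (F : ℝ → ℝ)
    (hF : ∀ x, F x = -(1/2) * ∫ y : ℝ, Real.sign (x - y) * Real.exp (-|x - y|) * f y) :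
    F a = F b ↔ f =ᵐ[volume] 0 := by
  have hdiff : F a - F b =
      -(1/2) * ∫ y, (oddExpKernel (a - y) - oddExpKernel (b - y)) * f y := by
    simp only [hF, sub_mul]
    rw [integral_sub (hf.oddExpKernel_mul a) (hf.oddExpKernel_mul b)]
    simp only [oddExpKernel]
    ring
  have hpos : ∀ᵐ y : ℝ, f y = 0 ∨ 0 < oddExpKernel (a - y) - oddExpKernel (b - y) := by
    filter_upwards [hf_zero] with y hy
    by_cases hyab : y ∈ Icc a b
    · exact Or.inl (hy hyab)
    · exact Or.inr (oddExpKernel_sub_pos hab hyab)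
  rw [← sub_eq_zero, hdiff, mul_eq_zero, or_iff_right (by norm_num)]
  refine integral_mul_eq_zero_iff_of_pos ?_ hf_nonneg hpos
  simpa only [sub_mul] using (hf.oddExpKernel_mul a).sub' (hf.oddExpKernel_mul b)
end

section
/- Let a, b ∈ ℝ with a < b, and let f : ℝ → ℝ be integrable with f(y) = 0 for every y ∈ [a,b]. Define F(x) = -(1/2) ∫_ℝ sgn(x-y) e^{-|x-y|} f(y) dy, where sgn denotes the sign function (sgn 0 = 0). Then F is differentiable at every point x ∈ (a,b), with F'(x) = (1/2) ∫_ℝ e^{-|x-y|} f(y) dy. -/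
open MeasureTheory Real Set Filter Topology

/-!
For `x ∈ [a, b]` the kernel `e^{-|x-y|}` splits as `e^{-x} e^{y}` on `y < a` and `e^{x} e^{-y}`
on `y > b`, and `f` vanishes in between. Hence on `(a, b)` the function `F` is the explicit
combination `-(1/2) (e^{-x} A - e^{x} B)` with constants `A = ∫_{y<a} e^y f`, `B = ∫_{y>b} e^{-y} f`,
whose derivative is `(1/2) (e^{-x} A + e^{x} B) = (1/2) ∫ e^{-|x-y|} f`.
-/

section Split

variable {E : Type*} [NormedAddCommGroup E] [NormedSpace ℝ E] {μ : Measure ℝ} {a b : ℝ}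

theorem integral_eq_setIntegral_Iio_add_setIntegral_Ioi {g : ℝ → E} (hab : a ≤ b)
    (hg_zero : ∀ y ∈ Icc a b, g y = 0)
    (hga : IntegrableOn g (Iio a) μ) (hgb : IntegrableOn g (Ioi b) μ) :
    ∫ y, g y ∂μ = (∫ y in Iio a, g y ∂μ) + ∫ y in Ioi b, g y ∂μ := by
  have hdisj : Disjoint (Iio a) (Ioi b) := (Iic_disjoint_Ioi hab).mono_left Iio_subset_Iic_self
  rw [← setIntegral_union hdisj measurableSet_Ioi hga hgb,
    setIntegral_eq_integral_of_forall_compl_eq_zero]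
  intro y hy
  simp only [mem_union, mem_Iio, mem_Ioi, not_or, not_lt] at hy
  exact hg_zero y hy

end Split

section Kernel

variable {f : ℝ → ℝ} {μ : Measure ℝ}

theorem integrableOn_exp_mul_Iio (hf : Integrable f μ) (a : ℝ) :
    IntegrableOn (fun y => exp y * f y) (Iio a) μ :=
  hf.integrableOn.bdd_mul continuous_exp.aestronglyMeasurable
    (ae_restrict_of_forall_mem measurableSet_Iio fun y hy => by
      rw [norm_of_nonneg (exp_pos y).le]
      exact exp_le_exp.mpr (le_of_lt hy))

theorem integrableOn_exp_neg_mul_Ioi (hf : Integrable f μ) (b : ℝ) :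
    IntegrableOn (fun y => exp (-y) * f y) (Ioi b) μ :=
  hf.integrableOn.bdd_mul (continuous_exp.comp continuous_neg).aestronglyMeasurable
    (ae_restrict_of_forall_mem measurableSet_Ioi fun y hy => by
      rw [norm_of_nonneg (exp_pos _).le]
      exact exp_le_exp.mpr (neg_le_neg (le_of_lt hy)))

theorem exp_neg_abs_sub_of_lt {x y : ℝ} (h : y < x) : exp (-|x - y|) = exp (-x) * exp y := by
  rw [abs_of_pos (sub_pos.mpr h), ← exp_add]
  ring_nf

theorem exp_neg_abs_sub_of_gt {x y : ℝ} (h : x < y) : exp (-|x - y|) = exp x * exp (-y) := by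
  rw [abs_of_neg (sub_neg.mpr h), ← exp_add]
  ring_nf

variable {a b x : ℝ}

theorem integral_exp_neg_abs_sub_mul_s6 (hf : Integrable f μ) (hf_zero : ∀ y ∈ Icc a b, f y = 0)
    (hx : x ∈ Icc a b) :
    ∫ y, exp (-|x - y|) * f y ∂μ =
      exp (-x) * (∫ y in Iio a, exp y * f y ∂μ) + exp x * ∫ y in Ioi b, exp (-y) * f y ∂μ := by
  have hleft : EqOn (fun y => exp (-|x - y|) * f y) (fun y => exp (-x) * (exp y * f y)) (Iio a) :=
    fun y hy => by
      simp only [exp_neg_abs_sub_of_lt (lt_of_lt_of_le hy hx.1)]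
      ring
  have hright : EqOn (fun y => exp (-|x - y|) * f y) (fun y => exp x * (exp (-y) * f y))
      (Ioi b) := fun y hy => by
    simp only [exp_neg_abs_sub_of_gt (lt_of_le_of_lt hx.2 hy)]
    ring
  rw [integral_eq_setIntegral_Iio_add_setIntegral_Ioi (hx.1.trans hx.2)
      (fun y hy => by simp [hf_zero y hy])
      (IntegrableOn.congr_fun ((integrableOn_exp_mul_Iio hf a).const_mul _) hleft.symm
        measurableSet_Iio)
      (IntegrableOn.congr_fun ((integrableOn_exp_neg_mul_Ioi hf b).const_mul _) hright.symm
        measurableSet_Ioi),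
    setIntegral_congr_fun measurableSet_Iio hleft, setIntegral_congr_fun measurableSet_Ioi hright,
    integral_const_mul, integral_const_mul]

theorem integral_sign_mul_exp_neg_abs_sub_mul (hf : Integrable f μ)
    (hf_zero : ∀ y ∈ Icc a b, f y = 0) (hx : x ∈ Icc a b) :
    ∫ y, sign (x - y) * exp (-|x - y|) * f y ∂μ =
      exp (-x) * (∫ y in Iio a, exp y * f y ∂μ) - exp x * ∫ y in Ioi b, exp (-y) * f y ∂μ := by
  have hleft : EqOn (fun y => sign (x - y) * exp (-|x - y|) * f y)
      (fun y => exp (-x) * (exp y * f y)) (Iio a) := fun y hy => by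
    have hxy : y < x := lt_of_lt_of_le hy hx.1
    simp only [sign_of_pos (sub_pos.mpr hxy), exp_neg_abs_sub_of_lt hxy]
    ring
  have hright : EqOn (fun y => sign (x - y) * exp (-|x - y|) * f y)
      (fun y => -(exp x * (exp (-y) * f y))) (Ioi b) := fun y hy => by
    have hxy : x < y := lt_of_le_of_lt hx.2 hy
    simp only [sign_of_neg (sub_neg.mpr hxy), exp_neg_abs_sub_of_gt hxy]
    ring
  rw [integral_eq_setIntegral_Iio_add_setIntegral_Ioi (hx.1.trans hx.2)
      (fun y hy => by simp [hf_zero y hy])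
      (IntegrableOn.congr_fun ((integrableOn_exp_mul_Iio hf a).const_mul _) hleft.symm
        measurableSet_Iio)
      (IntegrableOn.congr_fun ((integrableOn_exp_neg_mul_Ioi hf b).const_mul _).neg
        hright.symm measurableSet_Ioi),
    setIntegral_congr_fun measurableSet_Iio hleft, setIntegral_congr_fun measurableSet_Ioi hright,
    integral_neg, integral_const_mul, integral_const_mul, sub_eq_add_neg]

end Kernel

theorem F_differentiable_on_interval_general
    (a b : ℝ)
    (f : ℝ → ℝ) (hf : Integrable f)
    (hf_zero : ∀ y ∈ Set.Icc a b, f y = 0)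
    (F : ℝ → ℝ)
    (hF : ∀ x, F x = -(1/2) * ∫ y : ℝ, Real.sign (x - y) * Real.exp (-|x - y|) * f y) :
    ∀ x ∈ Set.Ioo a b,
      HasDerivAt F ((1/2) * ∫ y : ℝ, Real.exp (-|x - y|) * f y) x := by
  intro x hx
  set A := ∫ y in Iio a, exp y * f y
  set B := ∫ y in Ioi b, exp (-y) * f y
  have hF_local : F =ᶠ[𝓝 x] fun z => -(1/2) * (exp (-z) * A - exp z * B) := by
    filter_upwards [Ioo_mem_nhds hx.1 hx.2] with z hz
    rw [hF, integral_sign_mul_exp_neg_abs_sub_mul hf hf_zero (Ioo_subset_Icc_self hz)]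
  have hderiv : HasDerivAt (fun z => -(1/2) * (exp (-z) * A - exp z * B))
      (-(1/2) * (exp (-x) * (-1) * A - exp x * B)) x :=
    (((hasDerivAt_neg x).exp.mul_const A).sub ((hasDerivAt_exp x).mul_const B)).const_mul _
  rw [integral_exp_neg_abs_sub_mul_s6 hf hf_zero (Ioo_subset_Icc_self hx)]
  refine (hderiv.congr_of_eventuallyEq hF_local).congr_deriv ?_
  ring

theorem F_differentiable_on_interval
    (a b : ℝ) (hab : a < b)
    (f : ℝ → ℝ) (hf : Integrable f)
    (hf_zero : ∀ y ∈ Set.Icc a b, f y = 0)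
    (F : ℝ → ℝ)
    (hF : ∀ x, F x = -(1/2) * ∫ y : ℝ, Real.sign (x - y) * Real.exp (-|x - y|) * f y) :
    ∀ x ∈ Set.Ioo a b,
      HasDerivAt F ((1/2) * ∫ y : ℝ, Real.exp (-|x - y|) * f y) x :=
  F_differentiable_on_interval_general a b f hf hf_zero F hF
end

section
/- Define g : ℝ → ℝ by g(x) = sinh(fract(x) - 1/2) / (2 sinh(1/2)), where fract(x) = x - ⌊x⌋ is the fractional part. Let a, b ∈ ℝ with 0 < a < b < 1. Then for every y ∈ [0,a] ∪ (b,1], one has g(b-y) > g(a-y). -/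
/-! For `y` in the given range, `a - y` and `b - y` lie in the same interval `[n, n + 1)`
(`n = 0` or `n = -1`), so `Int.fract` preserves their order; `g` is an increasing function
of `Int.fract`. -/

theorem Int.fract_lt_fract_of_floor_eq {α : Type*} [Ring α] [LinearOrder α]
    [IsStrictOrderedRing α] [FloorRing α] {x x' : α} (hlt : x < x') (hfloor : ⌊x⌋ = ⌊x'⌋) :
    Int.fract x < Int.fract x' := by
  rw [Int.fract, Int.fract, hfloor]
  exact sub_lt_sub_right hlt _

theorem floor_sub_eq_floor_sub_of_mem {a b y : ℝ} (ha : 0 < a) (hab : a < b) (hb : b < 1)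
    (hy : y ∈ Set.Icc (0 : ℝ) a ∪ Set.Ioc b 1) : ⌊a - y⌋ = ⌊b - y⌋ := by
  rcases hy with ⟨hy0, hya⟩ | ⟨hby, hy1⟩
  · rw [Int.floor_eq_zero_iff.mpr ⟨by linarith, by linarith⟩,
      Int.floor_eq_zero_iff.mpr ⟨by linarith, by linarith⟩]
  · rw [(Int.floor_eq_iff (z := -1)).mpr ⟨by push_cast; linarith, by push_cast; linarith⟩,
      (Int.floor_eq_iff (z := -1)).mpr ⟨by push_cast; linarith, by push_cast; linarith⟩]

theorem periodic_kernel_strict_monotone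
    (g : ℝ → ℝ)
    (hg : ∀ x, g x = Real.sinh (Int.fract x - 1/2) / (2 * Real.sinh (1/2)))
    (a b : ℝ) (ha : 0 < a) (hab : a < b) (hb : b < 1) :
    ∀ y ∈ Set.Icc (0 : ℝ) a ∪ Set.Ioc b 1, g (b - y) > g (a - y) := by
  intro y hy
  have hsinh : 0 < 2 * Real.sinh (1/2) := by positivity
  rw [hg, hg, gt_iff_lt, div_lt_div_iff_of_pos_right hsinh, Real.sinh_lt_sinh,
    sub_lt_sub_iff_right]
  exact Int.fract_lt_fract_of_floor_eq (by linarith) (floor_sub_eq_floor_sub_of_mem ha hab hb hy)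
end

section
/- Define g : ℝ → ℝ by g(x) = sinh(fract(x) - 1/2) / (2 sinh(1/2)), where fract(x) = x - ⌊x⌋ is the fractional part. Let a, b ∈ ℝ with 0 < a < b < 1, and let f : ℝ → ℝ be 1-periodic, integrable on [0,1], with f ≥ 0 almost everywhere and f = 0 almost everywhere on [a,b]. Define F(x) = ∫_0^1 g(x-y) f(y) dy. Then F(b) ≥ F(a), and F(a) = F(b) if and only if f = 0 almost everywhere on [0,1]. -/
/-!
For `y ∈ [0, 1]` outside `[a, b]`, the points `a - y` and `b - y` lie in the same period cell, where
`g` is `sinh (· - 1/2)` up to a shift and a positive factor. Hence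
`g (b - y) - g (a - y) ≥ c := sinh ((b - a) / 2) / sinh (1 / 2) > 0`, and since `f ≥ 0`
vanishes on `[a, b]`, `F b - F a ≥ c ∫₀¹ f ≥ 0`, with equality only when `∫₀¹ f = 0`.
-/

open MeasureTheory Real Set

namespace Real

theorem sinh_add_sub_sinh (t d : ℝ) :
    sinh (t + d) - sinh t = 2 * cosh (t + d / 2) * sinh (d / 2) := by
  have h := sinh_add (t + d / 2) (d / 2)
  have h' := sinh_sub (t + d / 2) (d / 2)
  rw [add_assoc, add_halves] at h
  rw [add_sub_cancel_right] at h'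
  rw [h, h']
  ring

theorem two_mul_sinh_half_le_sinh_add_sub_sinh (t : ℝ) {d : ℝ} (hd : 0 ≤ d) :
    2 * sinh (d / 2) ≤ sinh (t + d) - sinh t := by
  rw [sinh_add_sub_sinh]
  have hs : 0 ≤ sinh (d / 2) := sinh_nonneg_iff.2 (by linarith)
  nlinarith [one_le_cosh (t + d / 2)]

end Real

theorem Int.fract_sub_fract_of_floor_eq {x y : ℝ} (h : ⌊x⌋ = ⌊y⌋) :
    Int.fract y - Int.fract x = y - x := by
  rw [Int.fract, Int.fract, h]
  ring

/-- The derivative of the periodic Green's function of `1 - ∂ₓ²` on `ℝ / ℤ`. -/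
noncomputable def periodicGreenDeriv (x : ℝ) : ℝ :=
  sinh (Int.fract x - 1 / 2) / (2 * sinh (1 / 2))

lemma measurable_periodicGreenDeriv : Measurable periodicGreenDeriv :=
  (continuous_sinh.measurable.comp (measurable_fract.sub_const _)).div_const _

lemma abs_periodicGreenDeriv_le (x : ℝ) : |periodicGreenDeriv x| ≤ 1 / 2 := by
  have hs : 0 < sinh (1 / 2 : ℝ) := sinh_pos_iff.2 (by norm_num)
  have h : |sinh (Int.fract x - 1 / 2)| ≤ sinh (1 / 2) := by
    rw [abs_sinh, sinh_le_sinh, abs_le]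
    constructor <;> linarith [Int.fract_nonneg x, Int.fract_lt_one x]
  rw [periodicGreenDeriv, abs_div, abs_of_pos (mul_pos two_pos hs), div_le_iff₀ (mul_pos two_pos hs)]
  linarith

lemma sinh_half_div_le_periodicGreenDeriv_sub {x y : ℝ} (hxy : x ≤ y) (hfl : ⌊x⌋ = ⌊y⌋) :
    sinh ((y - x) / 2) / sinh (1 / 2) ≤ periodicGreenDeriv y - periodicGreenDeriv x := by
  have hs : 0 < sinh (1 / 2 : ℝ) := sinh_pos_iff.2 (by norm_num)
  have hshift : Int.fract y - 1 / 2 = (Int.fract x - 1 / 2) + (y - x) := by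
    linarith [Int.fract_sub_fract_of_floor_eq hfl]
  have hgap := two_mul_sinh_half_le_sinh_add_sub_sinh (Int.fract x - 1 / 2) (sub_nonneg.2 hxy)
  rw [periodicGreenDeriv, periodicGreenDeriv, hshift, div_sub_div_same,
    div_le_div_iff₀ hs (by positivity)]
  nlinarith

lemma floor_sub_eq_floor_sub_of_notMem_Icc {a b y : ℝ} (ha : 0 < a) (hab : a ≤ b) (hb : b < 1)
    (hy : y ∈ Icc (0 : ℝ) 1) (hyab : y ∉ Icc a b) : ⌊a - y⌋ = ⌊b - y⌋ := by
  obtain ⟨hy0, hy1⟩ := hy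
  rcases lt_or_ge y a with hya | hay
  · have hb' : b - y < 1 := by linarith
    rw [Int.floor_eq_zero_iff.2 ⟨by linarith, by linarith⟩,
      Int.floor_eq_zero_iff.2 ⟨by linarith, by linarith⟩]
  · have hby : b < y := lt_of_not_ge fun hyb => hyab ⟨hay, hyb⟩
    rw [(Int.floor_eq_iff (z := -1)).2 ⟨by push_cast; linarith, by push_cast; linarith⟩,
      (Int.floor_eq_iff (z := -1)).2 ⟨by push_cast; linarith, by push_cast; linarith⟩]

lemma integrableOn_periodicGreenDeriv_sub_mul {f : ℝ → ℝ} {s : Set ℝ}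
    (hf : IntegrableOn f s) (x : ℝ) :
    IntegrableOn (fun y => periodicGreenDeriv (x - y) * f y) s :=
  hf.bdd_mul (c := 1 / 2)
    (measurable_periodicGreenDeriv.comp (measurable_const.sub measurable_id)).aestronglyMeasurable
    (ae_of_all _ fun y => by simpa only [norm_eq_abs] using abs_periodicGreenDeriv_le (x - y))

lemma const_mul_integral_le_integral_periodicGreenDeriv_sub {a b : ℝ} (ha : 0 < a)
    (hab : a < b) (hb : b < 1) {f : ℝ → ℝ}
    (hf_nonneg : ∀ᵐ y ∂(volume.restrict (Icc (0 : ℝ) 1)), 0 ≤ f y)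
    (hf_zero : ∀ᵐ y ∂(volume.restrict (Icc (0 : ℝ) 1)), y ∈ Icc a b → f y = 0)
    (hint : IntegrableOn f (Icc (0 : ℝ) 1)) :
    sinh ((b - a) / 2) / sinh (1 / 2) * ∫ y in Icc (0 : ℝ) 1, f y ≤
      ∫ y in Icc (0 : ℝ) 1, (periodicGreenDeriv (b - y) - periodicGreenDeriv (a - y)) * f y := by
  rw [← integral_const_mul]
  refine integral_mono_ae (hint.const_mul _) ?_ ?_
  · simp_rw [sub_mul]
    exact (integrableOn_periodicGreenDeriv_sub_mul hint b).sub
      (integrableOn_periodicGreenDeriv_sub_mul hint a)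
  filter_upwards [hf_nonneg, hf_zero, ae_restrict_mem measurableSet_Icc] with y hfy hfy₀ hy
  by_cases hyab : y ∈ Icc a b
  · simp [hfy₀ hyab]
  · refine mul_le_mul_of_nonneg_right ?_ hfy
    have key := sinh_half_div_le_periodicGreenDeriv_sub (x := a - y) (y := b - y)
      (by linarith) (floor_sub_eq_floor_sub_of_notMem_Icc ha hab.le hb hy hyab)
    rwa [sub_sub_sub_cancel_right] at key

theorem periodic_F_endpoint_monotone_general
    (g : ℝ → ℝ)
    (hg : ∀ x, g x = Real.sinh (Int.fract x - 1/2) / (2 * Real.sinh (1/2)))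
    (a b : ℝ) (ha : 0 < a) (hab : a < b) (hb : b < 1)
    (f : ℝ → ℝ)
    (hint : IntegrableOn f (Set.Icc (0 : ℝ) 1))
    (hf_nonneg : ∀ᵐ y : ℝ, 0 ≤ f y)
    (hf_zero : ∀ᵐ y : ℝ, y ∈ Set.Icc a b → f y = 0)
    (F : ℝ → ℝ)
    (hF : ∀ x, F x = ∫ y in (0:ℝ)..1, g (x - y) * f y) :
    F a ≤ F b ∧
      (F a = F b ↔ ∀ᵐ y ∂(volume.restrict (Set.Icc (0:ℝ) 1)), f y = 0) := by
  obtain rfl : g = periodicGreenDeriv := funext hg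
  set c := sinh ((b - a) / 2) / sinh (1 / 2)
  have hc : 0 < c := div_pos (sinh_pos_iff.2 (by linarith)) (sinh_pos_iff.2 (by norm_num))
  have hF_Icc (x : ℝ) : F x = ∫ y in Icc (0 : ℝ) 1, periodicGreenDeriv (x - y) * f y := by
    rw [hF, intervalIntegral.integral_of_le zero_le_one, integral_Icc_eq_integral_Ioc]
  have hgap : c * ∫ y in Icc (0 : ℝ) 1, f y ≤ F b - F a := by
    rw [hF_Icc, hF_Icc, ← integral_sub (integrableOn_periodicGreenDeriv_sub_mul hint b)
      (integrableOn_periodicGreenDeriv_sub_mul hint a)]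
    simpa only [sub_mul] using const_mul_integral_le_integral_periodicGreenDeriv_sub ha hab hb
      (ae_restrict_of_ae hf_nonneg) (ae_restrict_of_ae hf_zero) hint
  have hf_int_nonneg : 0 ≤ ∫ y in Icc (0 : ℝ) 1, f y :=
    integral_nonneg_of_ae (ae_restrict_of_ae hf_nonneg)
  refine ⟨by nlinarith, fun hFab => ?_, fun hf0 => ?_⟩
  · have hf_int_zero : ∫ y in Icc (0 : ℝ) 1, f y = 0 := by nlinarith
    exact (integral_eq_zero_iff_of_nonneg_ae (ae_restrict_of_ae hf_nonneg) hint).1 hf_int_zero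
  · have hF_zero (x : ℝ) : F x = 0 := by
      rw [hF_Icc, integral_eq_zero_of_ae]
      filter_upwards [hf0] with y hy
      simp [hy]
    rw [hF_zero, hF_zero]

theorem periodic_F_endpoint_monotone
    (g : ℝ → ℝ)
    (hg : ∀ x, g x = Real.sinh (Int.fract x - 1/2) / (2 * Real.sinh (1/2)))
    (a b : ℝ) (ha : 0 < a) (hab : a < b) (hb : b < 1)
    (f : ℝ → ℝ) (hper : Function.Periodic f 1)
    (hint : IntegrableOn f (Set.Icc (0 : ℝ) 1))
    (hf_nonneg : ∀ᵐ y : ℝ, 0 ≤ f y)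
    (hf_zero : ∀ᵐ y : ℝ, y ∈ Set.Icc a b → f y = 0)
    (F : ℝ → ℝ)
    (hF : ∀ x, F x = ∫ y in (0:ℝ)..1, g (x - y) * f y) :
    F a ≤ F b ∧
      (F a = F b ↔ ∀ᵐ y ∂(volume.restrict (Set.Icc (0:ℝ) 1)), f y = 0) :=
  periodic_F_endpoint_monotone_general g hg a b ha hab hb f hint hf_nonneg hf_zero F hF
end

section
/- Define G : ℝ → ℝ by G(x) = cosh(fract(x) - 1/2) / (2 sinh(1/2)), where fract(x) = x - ⌊x⌋ is the fractional part. Let h : ℝ → ℝ be continuous and 1-periodic, and define u(x) = ∫_0^1 G(x-y) h(y) dy. Then u is twice differentiable on ℝ and satisfies u(x) - u''(x) = h(x) for every x ∈ ℝ. -/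
/-!
By periodicity of the integrand in `y`, the integral over `[0, 1]` may be taken over the window
`[x - 1, x]`, where `fract (x - y) = x - y` and the kernel is `cosh (x - y - 1/2)`. The addition
formula separates the variables, so differentiating in `x` only needs the fundamental theorem of
calculus at both ends of the window. By periodicity of `h`, the boundary terms cancel for the
`cosh` kernel and add up to `-2 sinh (1/2) h x` for the `sinh` kernel; hence `u'` is the `sinh`
convolution and `u'' = u - h`.
-/

open Real intervalIntegral Function

theorem Continuous.hasDerivAt_integral_sub_const {E : Type*} [NormedAddCommGroup E]
    [NormedSpace ℝ E] [CompleteSpace E] {f : ℝ → E} (hf : Continuous f) (p x : ℝ) :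
    HasDerivAt (fun x => ∫ y in x - p..x, f y) (f x - f (x - p)) x := by
  have hF (t : ℝ) : HasDerivAt (fun t => ∫ y in (0:ℝ)..t, f y) (f t) t :=
    (hf.integral_hasStrictDerivAt 0 t).hasDerivAt
  convert (hF x).sub ((hF (x - p)).comp_sub_const x p) using 1
  funext t
  exact (integral_interval_sub_left (hf.intervalIntegrable _ _) (hf.intervalIntegrable _ _)).symm

section

variable {f : ℝ → ℝ} {a b : ℝ}

theorem integral_cosh_sub_mul (hf : IntervalIntegrable f MeasureTheory.volume a b) (z : ℝ) :
    ∫ y in a..b, cosh (z - y) * f y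
      = (cosh z * ∫ y in a..b, cosh y * f y) - sinh z * ∫ y in a..b, sinh y * f y := by
  have hcosh := hf.continuousOn_mul continuous_cosh.continuousOn
  have hsinh := hf.continuousOn_mul continuous_sinh.continuousOn
  simp_rw [cosh_sub, sub_mul, mul_assoc]
  rw [integral_sub (hcosh.const_mul _) (hsinh.const_mul _), integral_const_mul, integral_const_mul]

theorem integral_sinh_sub_mul (hf : IntervalIntegrable f MeasureTheory.volume a b) (z : ℝ) :
    ∫ y in a..b, sinh (z - y) * f y
      = (sinh z * ∫ y in a..b, cosh y * f y) - cosh z * ∫ y in a..b, sinh y * f y := by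
  have hcosh := hf.continuousOn_mul continuous_cosh.continuousOn
  have hsinh := hf.continuousOn_mul continuous_sinh.continuousOn
  simp_rw [sinh_sub, sub_mul, mul_assoc]
  rw [integral_sub (hcosh.const_mul _) (hsinh.const_mul _), integral_const_mul, integral_const_mul]

end

/-- For `p`-periodic `f`, the convolution on `ℝ / pℤ` of `f` with the kernel equal to
`cosh (t - p / 2)` for `t ∈ [0, p]`. -/
noncomputable def periodicCoshConv (p : ℝ) (f : ℝ → ℝ) (x : ℝ) : ℝ :=
  ∫ y in x - p..x, cosh (x - y - p / 2) * f y

noncomputable def periodicSinhConv (p : ℝ) (f : ℝ → ℝ) (x : ℝ) : ℝ :=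
  ∫ y in x - p..x, sinh (x - y - p / 2) * f y

section

variable {p : ℝ} {f : ℝ → ℝ}

theorem periodicCoshConv_eq (hf : Continuous f) (x : ℝ) :
    periodicCoshConv p f x = cosh (x - p / 2) * (∫ y in x - p..x, cosh y * f y)
      - sinh (x - p / 2) * ∫ y in x - p..x, sinh y * f y := by
  rw [periodicCoshConv, ← integral_cosh_sub_mul (hf.intervalIntegrable (x - p) x) (x - p / 2)]
  exact integral_congr fun y _ => by simp only [sub_right_comm x y]

theorem periodicSinhConv_eq (hf : Continuous f) (x : ℝ) :
    periodicSinhConv p f x = sinh (x - p / 2) * (∫ y in x - p..x, cosh y * f y)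
      - cosh (x - p / 2) * ∫ y in x - p..x, sinh y * f y := by
  rw [periodicSinhConv, ← integral_sinh_sub_mul (hf.intervalIntegrable (x - p) x) (x - p / 2)]
  exact integral_congr fun y _ => by simp only [sub_right_comm x y]

theorem hasDerivAt_integral_sub_period_mul {g : ℝ → ℝ} (hg : Continuous g) (hf : Continuous f)
    (hper : Periodic f p) (x : ℝ) :
    HasDerivAt (fun x => ∫ y in x - p..x, g y * f y) ((g x - g (x - p)) * f x) x := by
  simpa only [Pi.mul_apply, hper.sub_eq, ← sub_mul] using
    (hg.mul hf).hasDerivAt_integral_sub_const p x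

theorem hasDerivAt_periodicCoshConv (hf : Continuous f) (hper : Periodic f p) (x : ℝ) :
    HasDerivAt (periodicCoshConv p f) (periodicSinhConv p f x) x := by
  have hC := (hasDerivAt_cosh (x - p / 2)).comp_sub_const x (p / 2)
  have hS := (hasDerivAt_sinh (x - p / 2)).comp_sub_const x (p / 2)
  have hP := hasDerivAt_integral_sub_period_mul continuous_cosh hf hper x
  have hQ := hasDerivAt_integral_sub_period_mul continuous_sinh hf hper x
  have hboundary : cosh (x - p / 2) * (cosh x - cosh (x - p))
      - sinh (x - p / 2) * (sinh x - sinh (x - p)) = 0 := by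
    have e1 := cosh_sub (x - p / 2) x
    have e2 := cosh_sub (x - p / 2) (x - p)
    rw [show x - p / 2 - x = -(p / 2) by ring, cosh_neg] at e1
    rw [show x - p / 2 - (x - p) = p / 2 by ring] at e2
    linear_combination e2 - e1
  rw [funext (periodicCoshConv_eq hf), periodicSinhConv_eq hf]
  refine ((hC.mul hP).sub (hS.mul hQ)).congr_deriv ?_
  linear_combination f x * hboundary

theorem hasDerivAt_periodicSinhConv (hf : Continuous f) (hper : Periodic f p) (x : ℝ) :
    HasDerivAt (periodicSinhConv p f) (periodicCoshConv p f x - 2 * sinh (p / 2) * f x) x := by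
  have hC := (hasDerivAt_cosh (x - p / 2)).comp_sub_const x (p / 2)
  have hS := (hasDerivAt_sinh (x - p / 2)).comp_sub_const x (p / 2)
  have hP := hasDerivAt_integral_sub_period_mul continuous_cosh hf hper x
  have hQ := hasDerivAt_integral_sub_period_mul continuous_sinh hf hper x
  have hboundary : sinh (x - p / 2) * (cosh x - cosh (x - p))
      - cosh (x - p / 2) * (sinh x - sinh (x - p)) = -(2 * sinh (p / 2)) := by
    have e1 := sinh_sub (x - p / 2) x
    have e2 := sinh_sub (x - p / 2) (x - p)
    rw [show x - p / 2 - x = -(p / 2) by ring, sinh_neg] at e1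
    rw [show x - p / 2 - (x - p) = p / 2 by ring] at e2
    linear_combination e2 - e1
  rw [funext (periodicSinhConv_eq hf), periodicCoshConv_eq hf]
  refine ((hS.mul hP).sub (hC.mul hQ)).congr_deriv ?_
  linear_combination f x * hboundary

end

theorem cosh_fract_sub_half_of_mem_Icc {t : ℝ} (ht : t ∈ Set.Icc 0 1) :
    cosh (Int.fract t - 1 / 2) = cosh (t - 1 / 2) := by
  rcases ht.2.lt_or_eq with ht1 | rfl
  · rw [Int.fract_eq_self.2 ⟨ht.1, ht1⟩]
  · rw [Int.fract_one, ← cosh_neg]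
    norm_num

theorem integral_cosh_fract_mul_eq_periodicCoshConv {f : ℝ → ℝ} (hper : Periodic f 1)
    (x : ℝ) :
    ∫ y in (0:ℝ)..1, cosh (Int.fract (x - y) - 1 / 2) * f y = periodicCoshConv 1 f x := by
  have hkernel : Periodic (fun y => cosh (Int.fract (x - y) - 1 / 2) * f y) 1 := fun y => by
    simp only [← sub_sub, Int.fract_sub_one, hper y]
  have hshift := hkernel.intervalIntegral_add_eq 0 (x - 1)
  rw [zero_add, sub_add_cancel] at hshift
  rw [hshift, periodicCoshConv]
  refine integral_congr fun y hy => ?_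
  rw [Set.uIcc_of_le (by linarith)] at hy
  rw [cosh_fract_sub_half_of_mem_Icc ⟨by linarith [hy.2], by linarith [hy.1]⟩]

theorem periodic_greens_function_identity
    (G : ℝ → ℝ)
    (hG : ∀ x, G x = Real.cosh (Int.fract x - 1/2) / (2 * Real.sinh (1/2)))
    (h : ℝ → ℝ) (hc : Continuous h) (hper : Function.Periodic h 1)
    (u : ℝ → ℝ)
    (hu : ∀ x, u x = ∫ y in (0:ℝ)..1, G (x - y) * h y) :
    ∃ u' u'' : ℝ → ℝ,
      (∀ x, HasDerivAt u (u' x) x) ∧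
      (∀ x, HasDerivAt u' (u'' x) x) ∧
      (∀ x, u x - u'' x = h x) := by
  have hD : 2 * sinh (1 / 2) ≠ 0 := by positivity
  have hu_eq : u = fun x => periodicCoshConv 1 h x / (2 * sinh (1 / 2)) := funext fun x => by
    simp_rw [hu, hG, div_mul_eq_mul_div, intervalIntegral.integral_div,
      integral_cosh_fract_mul_eq_periodicCoshConv hper]
  refine ⟨fun x => periodicSinhConv 1 h x / (2 * sinh (1 / 2)), fun x => u x - h x,
    fun x => ?_, fun x => ?_, fun x => sub_sub_cancel _ _⟩
  · rw [hu_eq]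
    exact (hasDerivAt_periodicCoshConv hc hper x).div_const _
  · refine ((hasDerivAt_periodicSinhConv hc hper x).div_const _).congr_deriv ?_
    rw [hu_eq]
    field_simp
end
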